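/- arXiv:1409.6646 — 8 statements merged into one kernel-verified Lean document; each statement's English description precedes it below -/
import Mathlib

section
/- The Laplace transform of S[p] satisfies L[S[p]](s) = (1/s) ∫_0^s L[p](s') ds' for all s > 0. -/
open MeasureTheory Real Set

/-- S[p](x) = ∫_x^∞ p(u)/u du. -/
noncomputable def S (p : ℝ → ℝ) (x : ℝ) : ℝ := ∫ u in Set.Ioi x, p u / u

/-- T[p] = S[p] * S[p] (convolution on [0,∞)). -/
noncomputable def T (p : ℝ → ℝ) (x : ℝ) : ℝ := ∫ v in (0:ℝ)..x, S p (x - v) * S p v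

/-- Laplace transform of a density on [0,∞). -/
noncomputable def L (p : ℝ → ℝ) (s : ℝ) : ℝ := ∫ x in Set.Ioi (0:ℝ), Real.exp (-s * x) * p x

/-! Both sides equal `s⁻¹ ∫_0^∞ (1 - e^{-su}) p(u)/u du` by Fubini: on the left one swaps `x` and
`u` over the triangle `0 < x < u`, on the right `t` and `u` over `(0, s] × (0, ∞)`, where
`|e^{-tu}| ≤ 1` gives integrability. -/

lemma integral_exp_neg_mul {c : ℝ} (hc : c ≠ 0) (b : ℝ) :
    ∫ x in (0:ℝ)..b, exp (-c * x) = (1 - exp (-c * b)) / c := by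
  have hderiv : ∀ x ∈ uIcc 0 b, HasDerivAt (fun x => -exp (-c * x) / c) (exp (-c * x)) x := by
    intro x _
    have h : HasDerivAt (fun x => -exp (-c * x) / c) (-(exp (-c * x) * (-c * 1)) / c) x :=
      (((hasDerivAt_id' x).const_mul (-c)).exp.neg).div_const c
    convert h using 1
    field_simp
  rw [intervalIntegral.integral_eq_sub_of_hasDerivAt hderiv
    ((by fun_prop : Continuous _).intervalIntegrable _ _)]
  simp only [mul_zero, exp_zero]
  ring

lemma integral_Ioi_mul_integral_Ioi_swap {a : ℝ} {f g : ℝ → ℝ} (hg : IntegrableOn g (Ioi a))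
    (hf : IntegrableOn f (Ioi a)) :
    ∫ x in Ioi a, g x * ∫ u in Ioi x, f u = ∫ u in Ioi a, (∫ x in a..u, g x) * f u := by
  set F : ℝ → ℝ → ℝ := fun x u => {z : ℝ × ℝ | z.1 < z.2}.indicator (fun z => g z.1 * f z.2) (x, u)
  have hF : Integrable (Function.uncurry F)
      ((volume.restrict (Ioi a)).prod (volume.restrict (Ioi a))) :=
    (hg.mul_prod hf).indicator (measurableSet_lt measurable_fst measurable_snd)
  have hleft : ∀ x ∈ Ioi a, ∫ u in Ioi a, F x u = g x * ∫ u in Ioi x, f u := by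
    intro x hx
    have : F x = (Ioi x).indicator fun u => g x * f u := by
      ext u; simp [F, indicator_apply]
    rw [this, setIntegral_indicator measurableSet_Ioi, Ioi_inter_Ioi, max_eq_right (le_of_lt hx),
      integral_const_mul]
  have hright : ∀ u ∈ Ioi a, ∫ x in Ioi a, F x u = (∫ x in a..u, g x) * f u := by
    intro u hu
    have : (fun x => F x u) = (Iio u).indicator fun x => g x * f u := by
      ext x; simp [F, indicator_apply]
    rw [this, setIntegral_indicator measurableSet_Iio, Ioi_inter_Iio, integral_mul_const,
      ← integral_Ioc_eq_integral_Ioo, ← intervalIntegral.integral_of_le (le_of_lt hu)]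
  rw [← setIntegral_congr_fun measurableSet_Ioi hleft, integral_integral_swap hF,
    setIntegral_congr_fun measurableSet_Ioi hright]

lemma integral_L_eq_integral_one_sub_exp_div_mul {f : ℝ → ℝ} (hf : IntegrableOn f (Ioi 0))
    {s : ℝ} (hs : 0 ≤ s) :
    ∫ t in (0:ℝ)..s, L f t = ∫ u in Ioi 0, (1 - exp (-s * u)) / u * f u := by
  have hint : Integrable (Function.uncurry fun t u => exp (-t * u) * f u)
      ((volume.restrict (Ioc 0 s)).prod (volume.restrict (Ioi 0))) := by
    refine (hf.comp_snd _).bdd_mul (c := 1) (by fun_prop) ?_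
    rw [Measure.prod_restrict]
    filter_upwards [ae_restrict_mem (measurableSet_Ioc.prod measurableSet_Ioi)] with z hz
    rw [norm_of_nonneg (exp_pos _).le, exp_le_one_iff, neg_mul, neg_nonpos]
    exact mul_nonneg hz.1.1.le (le_of_lt hz.2)
  rw [intervalIntegral.integral_of_le hs]
  refine (integral_integral_swap hint).trans
    (setIntegral_congr_fun measurableSet_Ioi fun u hu => ?_)
  have hcomm : (fun t => exp (-t * u)) = fun t => exp (-u * t) := by
    ext t; ring_nf
  rw [integral_mul_const, ← intervalIntegral.integral_of_le hs, hcomm,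
    integral_exp_neg_mul (ne_of_gt hu), neg_mul_comm, mul_comm u]

theorem laplace_S_general (p : ℝ → ℝ)
    (hpint : IntegrableOn p (Set.Ioi 0))
    (hfub : IntegrableOn (fun u => p u / u) (Set.Ioi 0)) :
    ∀ s : ℝ, 0 < s → L (S p) s = (1 / s) * ∫ t in (0:ℝ)..s, L p t := by
  intro s hs
  have hLS : L (S p) s = ∫ u in Ioi 0, (∫ x in (0:ℝ)..u, exp (-s * x)) * (p u / u) :=
    integral_Ioi_mul_integral_Ioi_swap (exp_neg_integrableOn_Ioi 0 hs) hfub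
  rw [hLS, integral_L_eq_integral_one_sub_exp_div_mul hpint hs.le, ← integral_const_mul]
  congr 1 with u
  rw [integral_exp_neg_mul (ne_of_gt hs)]
  ring

/-- The Laplace transform of S[p] satisfies L[S[p]](s) = (1/s)∫_0^s L[p](s')ds'. -/
theorem laplace_S (p : ℝ → ℝ) (hpm : Measurable p) (hpnn : ∀ x, 0 ≤ p x)
    (hpint : IntegrableOn p (Set.Ioi 0)) (hp1 : ∫ x in Set.Ioi (0:ℝ), p x = 1)
    (hfub : IntegrableOn (fun u => p u / u) (Set.Ioi 0)) :
    ∀ s : ℝ, 0 < s → L (S p) s = (1 / s) * ∫ t in (0:ℝ)..s, L p t :=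
  laplace_S_general p hpint hfub
end

section
/- The Gamma density p_w(x) = (4/w²) x e^{-2x/w} is a fixed point of the operator T[p] = S[p] * S[p] (convolution), i.e. T[p_w] = p_w for every w > 0. -/
open MeasureTheory Real Set

/- On `(0, ∞)` the factor `u` of `c u e^{a u}` cancels the `1/u` in `S`, so `S` turns it into the
single exponential `(-c/a) e^{a u}`; convolving this with itself gives `(c/a)² x e^{a x}`, and for
`c = 4/w²`, `a = -2/w` one has `(c/a)² = c`. -/

lemma S_mul_mul_exp {a : ℝ} (ha : a < 0) (c : ℝ) {x : ℝ} (hx : 0 ≤ x) :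
    S (fun u => c * u * exp (a * u)) x = -c / a * exp (a * x) := by
  have hcancel : ∀ u ∈ Ioi x, c * u * exp (a * u) / u = c * exp (a * u) := fun u hu => by
    have hu : u ≠ 0 := (hx.trans_lt hu).ne'
    field_simp
  rw [S, setIntegral_congr_fun measurableSet_Ioi hcancel, integral_const_mul,
    integral_exp_mul_Ioi ha]
  ring

lemma T_mul_mul_exp {a : ℝ} (ha : a < 0) (c : ℝ) {x : ℝ} (hx : 0 ≤ x) :
    T (fun u => c * u * exp (a * u)) x = (c / a) ^ 2 * x * exp (a * x) := by
  have hconst : ∀ v ∈ uIcc 0 x,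
      S (fun u => c * u * exp (a * u)) (x - v) * S (fun u => c * u * exp (a * u)) v
        = (c / a) ^ 2 * exp (a * x) := by
    intro v hv
    rw [uIcc_of_le hx] at hv
    rw [S_mul_mul_exp ha c (by linarith [hv.2]), S_mul_mul_exp ha c hv.1,
      show a * x = a * (x - v) + a * v by ring, exp_add]
    ring
  rw [T, intervalIntegral.integral_congr hconst, intervalIntegral.integral_const, smul_eq_mul]
  ring

/-- The Gamma density with shape 2 and mean w is a fixed point of T. -/
theorem gamma_fixed_point (w : ℝ) (hw : 0 < w) :
    ∀ x : ℝ, 0 ≤ x →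
      T (fun u => (4 / w ^ 2) * u * Real.exp (-2 * u / w)) x
        = (4 / w ^ 2) * x * Real.exp (-2 * x / w) := by
  intro x hx
  have hrate : ∀ u : ℝ, -2 * u / w = -2 / w * u := fun u => by ring
  simp only [hrate]
  rw [T_mul_mul_exp (div_neg_of_neg_of_pos (by norm_num) hw) _ hx]
  congr 2
  field_simp
  ring
end

section
/- If p is a probability density on [0,∞) whose Laplace transform p̂ satisfies p̂(s) = ((1/s)∫_0^s p̂(s')ds')² for all s > 0, then p̂(s) = 1/(1+Cs)² for some constant C ≥ 0. -/
/-!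
With `F s = ∫ t in 0..s, L p t`, the fixed-point equation says `F' = (F / s) ^ 2`. For this
Riccati equation `1 / F - 1 / s` has derivative zero, so `1 / F s = 1 / s + C`, and positivity of
`F` forces `C ≥ 0`. Then `L p s = (F s / s) ^ 2 = 1 / (1 + C s) ^ 2`. That `F` is differentiable
comes from continuity of `L p` on `[0, ∞)`, by dominated convergence with dominating function `|p|`.
-/

open MeasureTheory Real Set

theorem norm_exp_neg_mul_mul_le {s x : ℝ} (hs : 0 ≤ s) (hx : 0 ≤ x) (y : ℝ) :
    ‖exp (-s * x) * y‖ ≤ ‖y‖ := by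
  rw [norm_mul, norm_of_nonneg (exp_pos _).le]
  exact mul_le_of_le_one_left (norm_nonneg y) (exp_le_one_iff.2 (by nlinarith))

section Laplace

variable {p : ℝ → ℝ}

theorem aestronglyMeasurable_laplace_integrand (hp : IntegrableOn p (Ioi 0)) (s : ℝ) :
    AEStronglyMeasurable (fun x => exp (-s * x) * p x) (volume.restrict (Ioi 0)) :=
  (by fun_prop : Continuous fun x => exp (-s * x)).aestronglyMeasurable.mul hp.1

theorem norm_laplace_integrand_le (s : ℝ) (hs : 0 ≤ s) :
    ∀ᵐ x ∂volume.restrict (Ioi 0), ‖exp (-s * x) * p x‖ ≤ ‖p x‖ :=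
  (ae_restrict_iff' measurableSet_Ioi).2 <| .of_forall fun _ hx =>
    norm_exp_neg_mul_mul_le hs (le_of_lt hx) _

theorem integrableOn_laplace_integrand (hp : IntegrableOn p (Ioi 0)) {s : ℝ} (hs : 0 ≤ s) :
    IntegrableOn (fun x => exp (-s * x) * p x) (Ioi 0) :=
  hp.norm.mono' (aestronglyMeasurable_laplace_integrand hp s) (norm_laplace_integrand_le s hs)

theorem continuousOn_L (hp : IntegrableOn p (Ioi 0)) : ContinuousOn (L p) (Ici 0) :=
  continuousOn_of_dominated (fun s _ => aestronglyMeasurable_laplace_integrand hp s)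
    (fun s hs => norm_laplace_integrand_le s hs) hp.norm
    (.of_forall fun x => by fun_prop)

theorem L_zero : L p 0 = ∫ x in Ioi 0, p x := by simp [L]

theorem L_pos (hp : IntegrableOn p (Ioi 0)) (hp_nonneg : ∀ x ∈ Ioi 0, 0 ≤ p x)
    (hp_pos : 0 < ∫ x in Ioi 0, p x) {s : ℝ} (hs : 0 ≤ s) : 0 < L p s := by
  have hnonneg : ∀ {f : ℝ → ℝ}, (∀ x ∈ Ioi 0, 0 ≤ f x) → 0 ≤ᵐ[volume.restrict (Ioi 0)] f :=
    fun hf => (ae_restrict_iff' measurableSet_Ioi).2 (.of_forall hf)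
  rw [setIntegral_pos_iff_support_of_nonneg_ae (hnonneg hp_nonneg) hp] at hp_pos
  rw [L, setIntegral_pos_iff_support_of_nonneg_ae
    (hnonneg fun x hx => mul_nonneg (exp_pos _).le (hp_nonneg x hx))
    (integrableOn_laplace_integrand hp hs)]
  convert hp_pos using 3
  ext x
  simp [(exp_pos _).ne']

end Laplace

theorem hasDerivAt_integral_of_continuousOn_Ici {f : ℝ → ℝ} {a s : ℝ}
    (hf : ContinuousOn f (Ici a)) (hs : a < s) :
    HasDerivAt (fun t => ∫ u in a..t, f u) (f s) s :=
  intervalIntegral.integral_hasDerivAt_right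
    ((hf.mono Icc_subset_Ici_self).intervalIntegrable_of_Icc hs.le)
    ((hf.mono Ioi_subset_Ici_self).stronglyMeasurableAtFilter isOpen_Ioi s hs)
    (hf.continuousAt (Ici_mem_nhds hs))

section Riccati

variable {F : ℝ → ℝ}

theorem exists_inv_sub_inv_eq_of_hasDerivAt
    (hF : ∀ s, 0 < s → HasDerivAt F ((F s / s) ^ 2) s) (hF_pos : ∀ s, 0 < s → 0 < F s) :
    ∃ C, ∀ s, 0 < s → (F s)⁻¹ - s⁻¹ = C := by
  have hderiv : ∀ s, 0 < s → HasDerivAt (fun t => (F t)⁻¹ - t⁻¹) 0 s := by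
    intro s hs
    have hFs := (hF_pos s hs).ne'
    refine (((hF s hs).inv hFs).sub (hasDerivAt_inv hs.ne')).congr_deriv ?_
    field_simp
    ring
  exact isOpen_Ioi.exists_is_const_of_deriv_eq_zero isPreconnected_Ioi
    (fun s hs => (hderiv s hs).differentiableAt.differentiableWithinAt)
    (fun s hs => (hderiv s hs).deriv)

theorem exists_div_eq_one_div_one_add_mul_of_hasDerivAt
    (hF : ∀ s, 0 < s → HasDerivAt F ((F s / s) ^ 2) s) (hF_pos : ∀ s, 0 < s → 0 < F s) :
    ∃ C, 0 ≤ C ∧ ∀ s, 0 < s → F s / s = 1 / (1 + C * s) := by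
  obtain ⟨C, hC⟩ := exists_inv_sub_inv_eq_of_hasDerivAt hF hF_pos
  have hinv : ∀ s, 0 < s → (F s)⁻¹ = s⁻¹ + C := fun s hs => by rw [← hC s hs]; ring
  refine ⟨C, ?_, fun s hs => ?_⟩
  · by_contra! hneg
    have hs : 0 < -C⁻¹ := neg_pos.2 (inv_lt_zero.2 hneg)
    have hpos := inv_pos.2 (hF_pos _ hs)
    rw [hinv _ hs, inv_neg, inv_inv, neg_add_cancel] at hpos
    exact hpos.false
  · calc F s / s = 1 / (s * (F s)⁻¹) := by field_simp
      _ = 1 / (1 + C * s) := by rw [hinv s hs]; field_simp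

end Riccati

theorem laplace_fixed_point_solution_general (p : ℝ → ℝ)
    (hpnn : ∀ x, 0 ≤ p x) (hpint : IntegrableOn p (Set.Ioi 0))
    (hp1 : ∫ x in Set.Ioi (0:ℝ), p x = 1)
    (heq : ∀ s : ℝ, 0 < s → L p s = ((1 / s) * ∫ t in (0:ℝ)..s, L p t) ^ 2) :
    ∃ C : ℝ, 0 ≤ C ∧ ∀ s : ℝ, 0 ≤ s → L p s = 1 / (1 + C * s) ^ 2 := by
  set F : ℝ → ℝ := fun s => ∫ t in (0:ℝ)..s, L p t
  have hL_cont := continuousOn_L hpint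
  have hL_pos : ∀ s, 0 ≤ s → 0 < L p s :=
    fun s => L_pos hpint (fun x _ => hpnn x) (hp1 ▸ one_pos)
  have hF : ∀ s, 0 < s → HasDerivAt F ((F s / s) ^ 2) s := fun s hs => by
    simpa only [heq s hs, one_div_mul_eq_div] using
      hasDerivAt_integral_of_continuousOn_Ici hL_cont hs
  have hF_pos : ∀ s, 0 < s → 0 < F s := fun s hs =>
    intervalIntegral.intervalIntegral_pos_of_pos_on
      ((hL_cont.mono Icc_subset_Ici_self).intervalIntegrable_of_Icc hs.le)
      (fun t ht => hL_pos t ht.1.le) hs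
  obtain ⟨C, hC, hFC⟩ := exists_div_eq_one_div_one_add_mul_of_hasDerivAt hF hF_pos
  refine ⟨C, hC, fun s hs => ?_⟩
  rcases hs.eq_or_lt with rfl | hs
  · simp [L_zero, hp1]
  · rw [heq s hs, one_div_mul_eq_div, hFC s hs, div_pow, one_pow]

/-- Solutions of the Laplace-transformed fixed point equation are (1+Cs)^{-2}. -/
theorem laplace_fixed_point_solution (p : ℝ → ℝ) (hpm : Measurable p)
    (hpnn : ∀ x, 0 ≤ p x) (hpint : IntegrableOn p (Set.Ioi 0))
    (hp1 : ∫ x in Set.Ioi (0:ℝ), p x = 1)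
    (heq : ∀ s : ℝ, 0 < s → L p s = ((1 / s) * ∫ t in (0:ℝ)..s, L p t) ^ 2) :
    ∃ C : ℝ, 0 ≤ C ∧ ∀ s : ℝ, 0 ≤ s → L p s = 1 / (1 + C * s) ^ 2 :=
  laplace_fixed_point_solution_general p hpnn hpint hp1 heq
end

section
/- The operator T preserves the mean: if p is a probability density on [0,∞) with ∫_0^∞ x p(x) dx = w < ∞, then ∫_0^∞ x T[p](x) dx = w. -/
open MeasureTheory Real Set

/-!
If `X` has density `p` and `U` is uniform on `(0, 1)` and independent of `X`, then `S p` is the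
density of `U X`; so `S p` is a probability density with mean `w / 2`, and `T p = S p * S p`,
the density of a sum of two independent copies of `U X`, has mean `w`. Analytically both facts
are Tonelli's theorem for nonnegative integrands: exchanging the order of integration gives
`∫ S p = ∫ p` and `2 ∫ x S p x = ∫ x p x`, and the substitution `x = a + v` splits the first
moment of a convolution as `∫ x (f * g) = (∫ x f) (∫ g) + (∫ f) (∫ x g)`.
-/

open scoped ENNReal

theorem MeasureTheory.StronglyMeasurable.setIntegral_prod_right
    {α β E : Type*} [MeasurableSpace α] [MeasurableSpace β] [NormedAddCommGroup E]
    [NormedSpace ℝ E] {ν : Measure β} [SFinite ν] {s : Set (α × β)} (hs : MeasurableSet s)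
    {F : α → β → E} (hF : StronglyMeasurable (Function.uncurry F)) :
    StronglyMeasurable fun x => ∫ y in Prod.mk x ⁻¹' s, F x y ∂ν := by
  convert (hF.indicator hs).integral_prod_right' (ν := ν) using 2 with x
  rw [← integral_indicator (measurable_prodMk_left hs)]
  rfl

lemma lintegral_Ioi_comp_add_right (g : ℝ → ℝ≥0∞) (v : ℝ) :
    ∫⁻ x in Ioi v, g x = ∫⁻ a in Ioi 0, g (a + v) := by
  rw [← lintegral_indicator measurableSet_Ioi, ← lintegral_indicator measurableSet_Ioi,
    ← lintegral_add_right_eq_self _ v]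
  congr 1 with a
  simp [indicator_apply]

lemma lintegral_Ioi_lintegral_Ioi_swap (a : ℝ) {F : ℝ → ℝ → ℝ≥0∞}
    (hF : Measurable (Function.uncurry F)) :
    ∫⁻ v in Ioi a, ∫⁻ u in Ioi v, F v u = ∫⁻ u in Ioi a, ∫⁻ v in Ioo a u, F v u := by
  set G : ℝ → ℝ → ℝ≥0∞ := fun v u => {q : ℝ × ℝ | q.1 < q.2}.indicator (Function.uncurry F) (v, u)
  have hG : Measurable (Function.uncurry G) :=
    hF.indicator (measurableSet_lt measurable_fst measurable_snd)
  calc ∫⁻ v in Ioi a, ∫⁻ u in Ioi v, F v u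
      = ∫⁻ v in Ioi a, ∫⁻ u in Ioi a, G v u := by
        refine setLIntegral_congr_fun measurableSet_Ioi fun v hv => ?_
        have hIoi : Ioi v = Ioi v ∩ Ioi a := by rw [Ioi_inter_Ioi, sup_eq_left.2 (le_of_lt hv)]
        rw [hIoi, ← setLIntegral_indicator measurableSet_Ioi]
        congr 1 with u
    _ = ∫⁻ u in Ioi a, ∫⁻ v in Ioi a, G v u := lintegral_lintegral_swap hG.aemeasurable
    _ = ∫⁻ u in Ioi a, ∫⁻ v in Ioo a u, F v u := by
        congr 1 with u
        rw [← Ioi_inter_Iio, Set.inter_comm, ← setLIntegral_indicator measurableSet_Iio]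
        congr 1 with v

lemma lintegral_Ioo_ofReal_id {u : ℝ} (hu : 0 ≤ u) :
    ∫⁻ v in Ioo 0 u, ENNReal.ofReal v = ENNReal.ofReal (u ^ 2 / 2) := by
  have hint : IntegrableOn (fun v : ℝ => v) (Ioo 0 u) :=
    (continuous_id.integrableOn_Icc (μ := volume)).mono_set Ioo_subset_Icc_self
  rw [← ofReal_integral_eq_lintegral_ofReal hint
    (ae_restrict_of_forall_mem measurableSet_Ioo fun v hv => hv.1.le),
    ← integral_Ioc_eq_integral_Ioo, ← intervalIntegral.integral_of_le hu, integral_id]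
  norm_num

lemma lintegral_Ioi_mul_convolution {f g : ℝ → ℝ≥0∞} (hf : Measurable f) (hg : Measurable g) :
    ∫⁻ x in Ioi 0, ENNReal.ofReal x * ∫⁻ v in Ioo 0 x, f (x - v) * g v =
      (∫⁻ x in Ioi 0, ENNReal.ofReal x * f x) * (∫⁻ v in Ioi 0, g v) +
        (∫⁻ x in Ioi 0, f x) * ∫⁻ v in Ioi 0, ENNReal.ofReal v * g v := by
  have hxf : Measurable fun x => ENNReal.ofReal x * f x := ENNReal.measurable_ofReal.mul hf
  calc ∫⁻ x in Ioi 0, ENNReal.ofReal x * ∫⁻ v in Ioo 0 x, f (x - v) * g v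
      = ∫⁻ x in Ioi 0, ∫⁻ v in Ioo 0 x, ENNReal.ofReal x * f (x - v) * g v := by
        congr 1 with x
        rw [← lintegral_const_mul' _ _ ENNReal.ofReal_ne_top]
        simp only [mul_assoc]
    _ = ∫⁻ v in Ioi 0, ∫⁻ x in Ioi v, ENNReal.ofReal x * f (x - v) * g v := by
        refine (lintegral_Ioi_lintegral_Ioi_swap 0 ?_).symm
        exact (measurable_snd.ennreal_ofReal.mul (hf.comp (measurable_snd.sub measurable_fst))).mul
          (hg.comp measurable_fst)
    _ = ∫⁻ v in Ioi 0, ((∫⁻ a in Ioi 0, ENNReal.ofReal a * f a) * g v +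
          (∫⁻ a in Ioi 0, f a) * (ENNReal.ofReal v * g v)) := by
        refine setLIntegral_congr_fun measurableSet_Ioi fun v (hv : 0 < v) => ?_
        calc ∫⁻ x in Ioi v, ENNReal.ofReal x * f (x - v) * g v
            = ∫⁻ a in Ioi 0, (ENNReal.ofReal a * f a * g v + f a * (ENNReal.ofReal v * g v)) := by
              rw [lintegral_Ioi_comp_add_right]
              refine setLIntegral_congr_fun measurableSet_Ioi fun a (ha : 0 < a) => ?_
              rw [add_sub_cancel_right, ENNReal.ofReal_add ha.le hv.le]
              ring
          _ = _ := by
              rw [lintegral_add_left (hxf.mul_const _), lintegral_mul_const _ hxf,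
                lintegral_mul_const _ hf]
    _ = _ := by
        rw [lintegral_add_left (hg.const_mul _), lintegral_const_mul _ hg,
          lintegral_const_mul _ (by fun_prop)]

section Density

variable {p : ℝ → ℝ}

lemma measurable_S (hpm : Measurable p) : Measurable (S p) :=
  (StronglyMeasurable.setIntegral_prod_right (measurableSet_lt measurable_fst measurable_snd)
    (F := fun _ u => p u / u)
    ((hpm.comp measurable_snd).div measurable_snd).stronglyMeasurable).measurable

lemma measurable_T (hpm : Measurable p) : Measurable (T p) := by
  have hF : StronglyMeasurable (Function.uncurry fun x v => S p (x - v) * S p v) :=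
    (((measurable_S hpm).comp (measurable_fst.sub measurable_snd)).mul
      ((measurable_S hpm).comp measurable_snd)).stronglyMeasurable
  have hpos : Measurable fun x => ∫ v in Ioc 0 x, S p (x - v) * S p v :=
    (StronglyMeasurable.setIntegral_prod_right (s := {q : ℝ × ℝ | 0 < q.2 ∧ q.2 ≤ q.1})
      ((measurableSet_lt measurable_const measurable_snd).inter
        (measurableSet_le measurable_snd measurable_fst)) hF).measurable
  have hneg : Measurable fun x => ∫ v in Ioc x 0, S p (x - v) * S p v :=
    (StronglyMeasurable.setIntegral_prod_right (s := {q : ℝ × ℝ | q.1 < q.2 ∧ q.2 ≤ 0})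
      ((measurableSet_lt measurable_fst measurable_snd).inter
        (measurableSet_le measurable_snd measurable_const)) hF).measurable
  exact hpos.sub hneg

lemma S_nonneg (hpnn : ∀ x, 0 ≤ p x) {x : ℝ} (hx : 0 ≤ x) : 0 ≤ S p x :=
  setIntegral_nonneg measurableSet_Ioi fun u hu => div_nonneg (hpnn u) (hx.trans hu.le)

lemma T_nonneg (hpnn : ∀ x, 0 ≤ p x) {x : ℝ} (hx : 0 ≤ x) : 0 ≤ T p x :=
  intervalIntegral.integral_nonneg hx fun _ hv =>
    mul_nonneg (S_nonneg hpnn (sub_nonneg.2 hv.2)) (S_nonneg hpnn hv.1)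

lemma S_antitoneOn (hpnn : ∀ x, 0 ≤ p x) (hS : IntegrableOn (fun u => p u / u) (Ioi 0)) :
    AntitoneOn (S p) (Ici 0) := fun x (hx : 0 ≤ x) _ _ hxy =>
  setIntegral_mono_set (hS.mono_set (Ioi_subset_Ioi hx))
    (ae_restrict_of_forall_mem measurableSet_Ioi fun u hu => div_nonneg (hpnn u) (hx.trans hu.le))
    (Ioi_subset_Ioi hxy).eventuallyLE

lemma ofReal_S (hpnn : ∀ x, 0 ≤ p x) (hS : IntegrableOn (fun u => p u / u) (Ioi 0)) {x : ℝ}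
    (hx : 0 ≤ x) : ENNReal.ofReal (S p x) = ∫⁻ u in Ioi x, ENNReal.ofReal (p u / u) :=
  ofReal_integral_eq_lintegral_ofReal (hS.mono_set (Ioi_subset_Ioi hx))
    (ae_restrict_of_forall_mem measurableSet_Ioi fun u hu => div_nonneg (hpnn u) (hx.trans hu.le))

lemma ofReal_T (hpm : Measurable p) (hpnn : ∀ x, 0 ≤ p x)
    (hS : IntegrableOn (fun u => p u / u) (Ioi 0)) {x : ℝ} (hx : 0 < x) :
    ENNReal.ofReal (T p x) =
      ∫⁻ v in Ioo 0 x, ENNReal.ofReal (S p (x - v)) * ENNReal.ofReal (S p v) := by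
  have hbound : ∀ v ∈ Ioo 0 x, ‖S p (x - v) * S p v‖ ≤ S p 0 * S p 0 := fun v hv => by
    have hxv : 0 ≤ x - v := sub_nonneg.2 hv.2.le
    rw [Real.norm_eq_abs, abs_of_nonneg (mul_nonneg (S_nonneg hpnn hxv) (S_nonneg hpnn hv.1.le))]
    exact mul_le_mul (S_antitoneOn hpnn hS self_mem_Ici hxv hxv)
      (S_antitoneOn hpnn hS self_mem_Ici hv.1.le hv.1.le) (S_nonneg hpnn hv.1.le)
      (S_nonneg hpnn le_rfl)
  have hint : IntegrableOn (fun v => S p (x - v) * S p v) (Ioo 0 x) :=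
    Measure.integrableOn_of_bounded measure_Ioo_lt_top.ne
      (((measurable_S hpm).comp (measurable_id.const_sub x)).mul
        (measurable_S hpm)).aestronglyMeasurable
      (ae_restrict_of_forall_mem measurableSet_Ioo hbound)
  rw [T, intervalIntegral.integral_of_le hx.le, integral_Ioc_eq_integral_Ioo,
    ofReal_integral_eq_lintegral_ofReal hint (ae_restrict_of_forall_mem measurableSet_Ioo
      fun v hv => mul_nonneg (S_nonneg hpnn (sub_nonneg.2 hv.2.le)) (S_nonneg hpnn hv.1.le))]
  refine setLIntegral_congr_fun measurableSet_Ioo fun v hv => ?_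
  exact ENNReal.ofReal_mul (S_nonneg hpnn (sub_nonneg.2 hv.2.le))

lemma lintegral_mul_ofReal_S (hpm : Measurable p) (hpnn : ∀ x, 0 ≤ p x)
    (hS : IntegrableOn (fun u => p u / u) (Ioi 0)) {φ : ℝ → ℝ≥0∞} (hφ : Measurable φ) :
    ∫⁻ v in Ioi 0, φ v * ENNReal.ofReal (S p v) =
      ∫⁻ u in Ioi 0, (∫⁻ v in Ioo 0 u, φ v) * ENNReal.ofReal (p u / u) := by
  calc ∫⁻ v in Ioi 0, φ v * ENNReal.ofReal (S p v)
      = ∫⁻ v in Ioi 0, ∫⁻ u in Ioi v, φ v * ENNReal.ofReal (p u / u) := by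
        refine setLIntegral_congr_fun measurableSet_Ioi fun v (hv : 0 < v) => ?_
        rw [ofReal_S hpnn hS hv.le, lintegral_const_mul _ (by fun_prop)]
    _ = ∫⁻ u in Ioi 0, ∫⁻ v in Ioo 0 u, φ v * ENNReal.ofReal (p u / u) :=
        lintegral_Ioi_lintegral_Ioi_swap 0
          ((hφ.comp measurable_fst).mul
            ((hpm.comp measurable_snd).div measurable_snd).ennreal_ofReal)
    _ = _ := by
        congr 1 with u
        exact lintegral_mul_const _ hφ

lemma lintegral_ofReal_S (hpm : Measurable p) (hpnn : ∀ x, 0 ≤ p x)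
    (hS : IntegrableOn (fun u => p u / u) (Ioi 0)) :
    ∫⁻ v in Ioi 0, ENNReal.ofReal (S p v) = ∫⁻ u in Ioi 0, ENNReal.ofReal (p u) := by
  have h := lintegral_mul_ofReal_S hpm hpnn hS (φ := fun _ => 1) measurable_const
  simp only [one_mul] at h
  rw [h]
  refine setLIntegral_congr_fun measurableSet_Ioi fun u (hu : 0 < u) => ?_
  rw [setLIntegral_const, one_mul, Real.volume_Ioo, sub_zero,
    ← ENNReal.ofReal_mul hu.le, mul_div_cancel₀ _ hu.ne']

lemma two_mul_lintegral_mul_ofReal_S (hpm : Measurable p) (hpnn : ∀ x, 0 ≤ p x)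
    (hS : IntegrableOn (fun u => p u / u) (Ioi 0)) :
    2 * ∫⁻ v in Ioi 0, ENNReal.ofReal v * ENNReal.ofReal (S p v) =
      ∫⁻ u in Ioi 0, ENNReal.ofReal (u * p u) := by
  rw [lintegral_mul_ofReal_S hpm hpnn hS ENNReal.measurable_ofReal,
    ← lintegral_const_mul' _ _ ENNReal.ofNat_ne_top]
  refine setLIntegral_congr_fun measurableSet_Ioi fun u (hu : 0 < u) => ?_
  rw [lintegral_Ioo_ofReal_id hu.le, ← ENNReal.ofReal_mul (by positivity),
    ← ENNReal.ofReal_ofNat 2, ← ENNReal.ofReal_mul zero_le_two]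
  congr 1
  field_simp

lemma lintegral_ofReal_mul_T (hpm : Measurable p) (hpnn : ∀ x, 0 ≤ p x)
    (hS : IntegrableOn (fun u => p u / u) (Ioi 0)) :
    ∫⁻ x in Ioi 0, ENNReal.ofReal (x * T p x) =
      2 * (∫⁻ v in Ioi 0, ENNReal.ofReal v * ENNReal.ofReal (S p v)) *
        ∫⁻ v in Ioi 0, ENNReal.ofReal (S p v) := by
  calc ∫⁻ x in Ioi 0, ENNReal.ofReal (x * T p x)
      = ∫⁻ x in Ioi 0, ENNReal.ofReal x *
          ∫⁻ v in Ioo 0 x, ENNReal.ofReal (S p (x - v)) * ENNReal.ofReal (S p v) := by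
        refine setLIntegral_congr_fun measurableSet_Ioi fun x (hx : 0 < x) => ?_
        rw [ENNReal.ofReal_mul hx.le, ofReal_T hpm hpnn hS hx]
    _ = _ := by
        rw [lintegral_Ioi_mul_convolution (measurable_S hpm).ennreal_ofReal
          (measurable_S hpm).ennreal_ofReal]
        ring

end Density

theorem T_preserves_mean_general (p : ℝ → ℝ) (w : ℝ) (hpm : Measurable p)
    (hpnn : ∀ x, 0 ≤ p x) (hpint : IntegrableOn p (Set.Ioi 0))
    (hp1 : ∫ x in Set.Ioi (0:ℝ), p x = 1)
    (hS : IntegrableOn (fun u => p u / u) (Set.Ioi 0))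
    (hw : ∫ x in Set.Ioi (0:ℝ), x * p x = w) :
    ∫ x in Set.Ioi (0:ℝ), x * T p x = w := by
  have hS_mass : ∫⁻ v in Ioi 0, ENNReal.ofReal (S p v) = 1 := by
    rw [lintegral_ofReal_S hpm hpnn hS, ← ofReal_integral_eq_lintegral_ofReal hpint
      (ae_restrict_of_forall_mem measurableSet_Ioi fun u _ => hpnn u), hp1, ENNReal.ofReal_one]
  have hT_mean : ∫⁻ x in Ioi 0, ENNReal.ofReal (x * T p x) =
      ∫⁻ x in Ioi 0, ENNReal.ofReal (x * p x) := by
    rw [lintegral_ofReal_mul_T hpm hpnn hS, hS_mass, mul_one,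
      two_mul_lintegral_mul_ofReal_S hpm hpnn hS]
  have hxT_nonneg : 0 ≤ᵐ[volume.restrict (Ioi 0)] fun x => x * T p x :=
    ae_restrict_of_forall_mem measurableSet_Ioi fun x (hx : 0 < x) =>
      mul_nonneg hx.le (T_nonneg hpnn hx.le)
  have hxp_nonneg : 0 ≤ᵐ[volume.restrict (Ioi 0)] fun x => x * p x :=
    ae_restrict_of_forall_mem measurableSet_Ioi fun x (hx : 0 < x) => mul_nonneg hx.le (hpnn x)
  rw [← hw, integral_eq_lintegral_of_nonneg_ae hxT_nonneg
      (measurable_id.mul (measurable_T hpm)).aestronglyMeasurable,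
    integral_eq_lintegral_of_nonneg_ae hxp_nonneg (measurable_id.mul hpm).aestronglyMeasurable,
    hT_mean]

/-- T preserves the mean wealth. -/
theorem T_preserves_mean (p : ℝ → ℝ) (w : ℝ) (hpm : Measurable p)
    (hpnn : ∀ x, 0 ≤ p x) (hpint : IntegrableOn p (Set.Ioi 0))
    (hp1 : ∫ x in Set.Ioi (0:ℝ), p x = 1)
    (hS : IntegrableOn (fun u => p u / u) (Set.Ioi 0))
    (hm : IntegrableOn (fun x => x * p x) (Set.Ioi 0))
    (hw : ∫ x in Set.Ioi (0:ℝ), x * p x = w) :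
    ∫ x in Set.Ioi (0:ℝ), x * T p x = w :=
  T_preserves_mean_general p w hpm hpnn hpint hp1 hS hw
end

section
/- For α ≥ 1, the operator T contracts the α-th moment: if p is a probability density on [0,∞) with M_α(p) = ∫_0^∞ x^α p(x) dx < ∞, then M_α(T[p]) ≤ (2^α/(α+1)) M_α(p). -/
/-!
On `(0, ∞)` the function `|S[p]|` is dominated by `s(x) = ∫ₓ^∞ |p(u)/u| du`. Extending `s` by `0`
to `ℝ`, `|T[p]| ≤ s ⋆ s`, so the Bochner integral of `x^α T[p]` is at most the Lebesgue integral
`∫ x^α (s ⋆ s)(x) dx = ∬ (y+z)^α s(y) s(z) dy dz`, and no integrability of `x^α T[p]` is needed.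
Convexity gives `(y+z)^α ≤ 2^(α-1) (y^α + z^α)`, and Tonelli gives
`∫₀^∞ y^β s(y) dy = M_β(p)/(β+1)`; with `β = 0` (total mass `1`) and `β = α` the bound is
`2^α M_α(p)/(α+1)`.
-/

open MeasureTheory Real Set
open scoped ENNReal

theorem lintegral_mul_lconvolution {G : Type*} [AddGroup G] [MeasurableSpace G]
    [MeasurableAdd₂ G] [MeasurableNeg G] {μ : Measure G} [μ.IsAddLeftInvariant] [SFinite μ]
    {w f g : G → ℝ≥0∞} (hw : Measurable w) (hf : Measurable f) (hg : Measurable g) :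
    ∫⁻ x, w x * (f ⋆ₗ[μ] g) x ∂μ = ∫⁻ y, ∫⁻ z, w (y + z) * f y * g z ∂μ ∂μ := by
  calc ∫⁻ x, w x * (f ⋆ₗ[μ] g) x ∂μ = ∫⁻ x, ∫⁻ y, w x * (f y * g (-y + x)) ∂μ ∂μ := by
        refine lintegral_congr fun x => ?_
        rw [lconvolution_def, lintegral_const_mul _ (by fun_prop)]
    _ = ∫⁻ y, ∫⁻ x, w x * (f y * g (-y + x)) ∂μ ∂μ := lintegral_lintegral_swap (by fun_prop)
    _ = ∫⁻ y, ∫⁻ z, w (y + z) * f y * g z ∂μ ∂μ := by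
        refine lintegral_congr fun y => ?_
        rw [← lintegral_add_left_eq_self _ y]
        simp [mul_assoc]

noncomputable def tailLIntegral (h : ℝ → ℝ≥0∞) (x : ℝ) : ℝ≥0∞ := ∫⁻ u in Ioi x, h u

theorem measurable_tailLIntegral (h : ℝ → ℝ≥0∞) : Measurable (tailLIntegral h) :=
  Antitone.measurable fun _ _ hxy =>
    lintegral_mono' (Measure.restrict_mono (Ioi_subset_Ioi hxy) le_rfl) le_rfl

theorem lintegral_Ioi_mul_tailLIntegral {g h : ℝ → ℝ≥0∞} (hg : Measurable g)
    (hh : Measurable h) (a : ℝ) :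
    ∫⁻ u in Ioi a, g u * tailLIntegral h u = ∫⁻ t in Ioi a, (∫⁻ u in Ioo a t, g u) * h t := by
  have hswap : Measurable (Function.uncurry fun u t => g u * (Ioi u).indicator h t) :=
    (hg.comp measurable_fst).mul <| Measurable.ite (measurableSet_lt measurable_fst measurable_snd)
      (hh.comp measurable_snd) measurable_const
  calc ∫⁻ u in Ioi a, g u * tailLIntegral h u
      = ∫⁻ u in Ioi a, ∫⁻ t, g u * (Ioi u).indicator h t := by
        simp_rw [tailLIntegral, ← lintegral_indicator measurableSet_Ioi,
          lintegral_const_mul _ (hh.indicator measurableSet_Ioi)]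
    _ = ∫⁻ t, ∫⁻ u in Ioi a, g u * (Ioi u).indicator h t :=
        lintegral_lintegral_swap hswap.aemeasurable
    _ = ∫⁻ t, (∫⁻ u in Ioo a t, g u) * h t := by
        refine lintegral_congr fun t => ?_
        have hind : ∀ u, g u * (Ioi u).indicator h t = (Iio t).indicator g u * h t := by
          intro u; by_cases hut : u < t <;> simp [hut]
        simp_rw [hind]
        rw [lintegral_mul_const _ (hg.indicator measurableSet_Iio),
          lintegral_indicator measurableSet_Iio, Measure.restrict_restrict measurableSet_Iio,
          Iio_inter_Ioi]
    _ = ∫⁻ t in Ioi a, (∫⁻ u in Ioo a t, g u) * h t := by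
        refine (setLIntegral_eq_of_support_subset fun t ht => ?_).symm
        by_contra hta
        rw [mem_Ioi, not_lt] at hta
        exact ht (by simp [Ioo_eq_empty_of_le hta])

theorem lintegral_ofReal_rpow_Ioo {β : ℝ} (hβ : -1 < β) {t : ℝ} (ht : 0 < t) :
    ∫⁻ u in Ioo 0 t, ENNReal.ofReal (u ^ β) = ENNReal.ofReal (t ^ (β + 1) / (β + 1)) := by
  have hint : IntegrableOn (fun u : ℝ => u ^ β) (Ioc 0 t) :=
    (intervalIntegral.intervalIntegrable_rpow' hβ).1
  rw [Measure.restrict_congr_set Ioo_ae_eq_Ioc, ← ofReal_integral_eq_lintegral_ofReal hint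
    ((ae_restrict_iff' measurableSet_Ioc).2 (ae_of_all _ fun u hu => rpow_nonneg hu.1.le β)),
    ← intervalIntegral.integral_of_le ht.le, integral_rpow (Or.inl hβ),
    zero_rpow (by linarith), sub_zero]

theorem lintegral_rpow_mul_tailLIntegral {β : ℝ} (hβ : -1 < β) {h : ℝ → ℝ≥0∞}
    (hh : Measurable h) :
    ∫⁻ u in Ioi 0, ENNReal.ofReal (u ^ β) * tailLIntegral h u
      = ∫⁻ t in Ioi 0, ENNReal.ofReal (t ^ (β + 1) / (β + 1)) * h t := by
  rw [lintegral_Ioi_mul_tailLIntegral (by fun_prop) hh]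
  exact setLIntegral_congr_fun measurableSet_Ioi fun t ht => by
    rw [lintegral_ofReal_rpow_Ioo hβ ht]

theorem ofReal_add_rpow_le {α y z : ℝ} (hα : 1 ≤ α) (hy : 0 ≤ y) (hz : 0 ≤ z) :
    ENNReal.ofReal ((y + z) ^ α)
      ≤ 2 ^ (α - 1) * (ENNReal.ofReal (y ^ α) + ENNReal.ofReal (z ^ α)) := by
  have hα0 : 0 ≤ α := by linarith
  rw [← ENNReal.ofReal_rpow_of_nonneg (add_nonneg hy hz) hα0, ENNReal.ofReal_add hy hz,
    ← ENNReal.ofReal_rpow_of_nonneg hy hα0, ← ENNReal.ofReal_rpow_of_nonneg hz hα0]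
  exact ENNReal.rpow_add_le_mul_rpow_add_rpow _ _ hα

theorem lintegral_rpow_mul_lconvolution_le {α : ℝ} (hα : 1 ≤ α) {f g : ℝ → ℝ≥0∞}
    (hf : Measurable f) (hg : Measurable g) (hf0 : f.support ⊆ Ici 0)
    (hg0 : g.support ⊆ Ici 0) :
    ∫⁻ x, ENNReal.ofReal (x ^ α) * (f ⋆ₗ g) x
      ≤ 2 ^ (α - 1) * ((∫⁻ y, ENNReal.ofReal (y ^ α) * f y) * (∫⁻ z, g z)
        + (∫⁻ y, f y) * ∫⁻ z, ENNReal.ofReal (z ^ α) * g z) := by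
  have hpow : Measurable fun y : ℝ => ENNReal.ofReal (y ^ α) := by fun_prop
  have hpoint : ∀ y z, ENNReal.ofReal ((y + z) ^ α) * f y * g z
      ≤ 2 ^ (α - 1) * (ENNReal.ofReal (y ^ α) * f y * g z
        + f y * (ENNReal.ofReal (z ^ α) * g z)) := by
    intro y z
    by_cases hy : f y = 0
    · simp [hy]
    by_cases hz : g z = 0
    · simp [hz]
    calc ENNReal.ofReal ((y + z) ^ α) * f y * g z
        ≤ 2 ^ (α - 1) * (ENNReal.ofReal (y ^ α) + ENNReal.ofReal (z ^ α)) * f y * g z := by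
          gcongr
          exact ofReal_add_rpow_le hα (hf0 hy) (hg0 hz)
      _ = _ := by ring
  rw [lintegral_mul_lconvolution hpow hf hg]
  refine (lintegral_mono fun y => lintegral_mono fun z => hpoint y z).trans_eq ?_
  have hinner : ∀ y, ∫⁻ z, 2 ^ (α - 1) * (ENNReal.ofReal (y ^ α) * f y * g z
        + f y * (ENNReal.ofReal (z ^ α) * g z))
      = 2 ^ (α - 1) * (ENNReal.ofReal (y ^ α) * f y * (∫⁻ z, g z)
        + f y * ∫⁻ z, ENNReal.ofReal (z ^ α) * g z) := fun y => by
    rw [lintegral_const_mul _ (by fun_prop), lintegral_add_left (by fun_prop),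
      lintegral_const_mul _ hg, lintegral_const_mul _ (by fun_prop)]
  simp_rw [hinner]
  rw [lintegral_const_mul _ (by fun_prop), lintegral_add_left (by fun_prop),
    lintegral_mul_const _ (by fun_prop), lintegral_mul_const _ hf]

noncomputable def Smajorant (p : ℝ → ℝ) : ℝ → ℝ≥0∞ :=
  (Ioi 0).indicator (tailLIntegral fun u => ‖p u / u‖ₑ)

theorem measurable_Smajorant (p : ℝ → ℝ) : Measurable (Smajorant p) :=
  (measurable_tailLIntegral _).indicator measurableSet_Ioi

theorem support_Smajorant_subset (p : ℝ → ℝ) : (Smajorant p).support ⊆ Ici 0 :=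
  support_indicator_subset.trans Ioi_subset_Ici_self

theorem enorm_S_le_Smajorant (p : ℝ → ℝ) {x : ℝ} (hx : 0 < x) : ‖S p x‖ₑ ≤ Smajorant p x := by
  rw [Smajorant, indicator_of_mem (mem_Ioi.2 hx)]
  exact enorm_integral_le_lintegral_enorm _

theorem enorm_T_le_lconvolution (p : ℝ → ℝ) {x : ℝ} (hx : 0 < x) :
    ‖T p x‖ₑ ≤ (Smajorant p ⋆ₗ Smajorant p) x := by
  rw [T, intervalIntegral.integral_of_le hx.le, lconvolution_def]
  calc ‖∫ v in Ioc 0 x, S p (x - v) * S p v‖ₑ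
      ≤ ∫⁻ v in Ioc 0 x, ‖S p (x - v) * S p v‖ₑ := enorm_integral_le_lintegral_enorm _
    _ = ∫⁻ v in Ioo 0 x, ‖S p (x - v) * S p v‖ₑ := by
        rw [Measure.restrict_congr_set Ioo_ae_eq_Ioc]
    _ ≤ ∫⁻ v in Ioo 0 x, Smajorant p v * Smajorant p (-v + x) :=
        setLIntegral_mono' measurableSet_Ioo fun v hv => by
          rw [enorm_mul, mul_comm, neg_add_eq_sub]
          gcongr
          · exact enorm_S_le_Smajorant p hv.1
          · exact enorm_S_le_Smajorant p (sub_pos.2 hv.2)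
    _ ≤ ∫⁻ v, Smajorant p v * Smajorant p (-v + x) := setLIntegral_le_lintegral _ _

theorem lintegral_rpow_mul_Smajorant {p : ℝ → ℝ} (hpm : Measurable p) (hpnn : ∀ x, 0 ≤ p x)
    {β : ℝ} (hβ : -1 < β) :
    ∫⁻ y, ENNReal.ofReal (y ^ β) * Smajorant p y
      = ENNReal.ofReal (1 / (β + 1)) * ∫⁻ t in Ioi 0, ENNReal.ofReal (t ^ β * p t) := by
  simp_rw [Smajorant, ← indicator_mul_right _ fun y => ENNReal.ofReal (y ^ β)]
  rw [lintegral_indicator measurableSet_Ioi, lintegral_rpow_mul_tailLIntegral hβ (by fun_prop),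
    ← lintegral_const_mul' _ _ ENNReal.ofReal_ne_top]
  refine setLIntegral_congr_fun measurableSet_Ioi fun t (ht : 0 < t) => ?_
  have hβ1 : 0 < β + 1 := by linarith
  rw [enorm_eq_ofReal (div_nonneg (hpnn t) ht.le),
    ← ENNReal.ofReal_mul (div_nonneg (rpow_nonneg ht.le _) hβ1.le),
    ← ENNReal.ofReal_mul (one_div_pos.2 hβ1).le, rpow_add ht, rpow_one]
  congr 1
  field_simp

theorem lintegral_enorm_rpow_mul_T_le (p : ℝ → ℝ) {α : ℝ} (hα : 1 ≤ α) :
    ∫⁻ x in Ioi 0, ‖x ^ α * T p x‖ₑ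
      ≤ 2 ^ (α - 1) * ((∫⁻ y, ENNReal.ofReal (y ^ α) * Smajorant p y) * (∫⁻ z, Smajorant p z)
        + (∫⁻ y, Smajorant p y) * ∫⁻ z, ENNReal.ofReal (z ^ α) * Smajorant p z) :=
  calc ∫⁻ x in Ioi 0, ‖x ^ α * T p x‖ₑ
      ≤ ∫⁻ x in Ioi 0, ENNReal.ofReal (x ^ α) * (Smajorant p ⋆ₗ Smajorant p) x :=
        setLIntegral_mono' measurableSet_Ioi fun x (hx : 0 < x) => by
          rw [enorm_mul, enorm_eq_ofReal (rpow_nonneg hx.le α)]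
          gcongr
          exact enorm_T_le_lconvolution p hx
    _ ≤ ∫⁻ x, ENNReal.ofReal (x ^ α) * (Smajorant p ⋆ₗ Smajorant p) x :=
        setLIntegral_le_lintegral _ _
    _ ≤ _ := lintegral_rpow_mul_lconvolution_le hα (measurable_Smajorant p)
        (measurable_Smajorant p) (support_Smajorant_subset p) (support_Smajorant_subset p)

theorem lintegral_Smajorant_eq_one {p : ℝ → ℝ} (hpm : Measurable p) (hpnn : ∀ x, 0 ≤ p x)
    (hp1 : ∫ x in Ioi 0, p x = 1) : ∫⁻ y, Smajorant p y = 1 := by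
  have hpint : IntegrableOn p (Ioi 0) := .of_integral_ne_zero (by rw [hp1]; exact one_ne_zero)
  simpa [← ofReal_integral_eq_lintegral_ofReal hpint (ae_of_all _ hpnn), hp1] using
    lintegral_rpow_mul_Smajorant hpm hpnn (β := 0) (by norm_num)

theorem T_moment_bound_general (p : ℝ → ℝ) (α : ℝ) (hα : 1 ≤ α) (hpm : Measurable p)
    (hpnn : ∀ x, 0 ≤ p x)
    (hp1 : ∫ x in Set.Ioi (0:ℝ), p x = 1)
    (hM : IntegrableOn (fun x => x ^ α * p x) (Set.Ioi 0)) :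
    ∫ x in Set.Ioi (0:ℝ), x ^ α * T p x
      ≤ (2 ^ α / (α + 1)) * ∫ x in Set.Ioi (0:ℝ), x ^ α * p x := by
  set Mα := ∫ x in Set.Ioi (0:ℝ), x ^ α * p x
  have hpoint : ∀ x ∈ Ioi (0:ℝ), 0 ≤ x ^ α * p x := fun x hx =>
    mul_nonneg (rpow_nonneg hx.le α) (hpnn x)
  have hMα : 0 ≤ Mα := setIntegral_nonneg measurableSet_Ioi hpoint
  have hmoment : ∫⁻ y, ENNReal.ofReal (y ^ α) * Smajorant p y
      = ENNReal.ofReal (1 / (α + 1)) * ENNReal.ofReal Mα := by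
    rw [lintegral_rpow_mul_Smajorant hpm hpnn (by linarith),
      ofReal_integral_eq_lintegral_ofReal hM (ae_restrict_of_forall_mem measurableSet_Ioi hpoint)]
  rw [← ENNReal.ofReal_le_ofReal_iff (by positivity)]
  calc ENNReal.ofReal (∫ x in Ioi 0, x ^ α * T p x)
      ≤ ∫⁻ x in Ioi 0, ‖x ^ α * T p x‖ₑ :=
        (ofReal_le_enorm _).trans (enorm_integral_le_lintegral_enorm _)
    _ ≤ _ := lintegral_enorm_rpow_mul_T_le p hα
    _ = ENNReal.ofReal (2 ^ α / (α + 1) * Mα) := by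
        rw [lintegral_Smajorant_eq_one hpm hpnn hp1, hmoment, mul_one, one_mul, ← two_mul,
          ← ENNReal.ofReal_mul (by positivity), ← ENNReal.ofReal_ofNat 2,
          ENNReal.ofReal_rpow_of_pos two_pos, ← ENNReal.ofReal_mul zero_le_two,
          ← ENNReal.ofReal_mul (by positivity), rpow_sub two_pos, rpow_one]
        congr 1
        field_simp

/-- T contracts the α-th moment by a factor 2^α/(α+1). -/
theorem T_moment_bound (p : ℝ → ℝ) (α : ℝ) (hα : 1 ≤ α) (hpm : Measurable p)
    (hpnn : ∀ x, 0 ≤ p x) (hpint : IntegrableOn p (Set.Ioi 0))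
    (hp1 : ∫ x in Set.Ioi (0:ℝ), p x = 1)
    (hS : IntegrableOn (fun u => p u / u) (Set.Ioi 0))
    (hM : IntegrableOn (fun x => x ^ α * p x) (Set.Ioi 0)) :
    ∫ x in Set.Ioi (0:ℝ), x ^ α * T p x
      ≤ (2 ^ α / (α + 1)) * ∫ x in Set.Ioi (0:ℝ), x ^ α * p x :=
  T_moment_bound_general p α hα hpm hpnn hp1 hM
end

section
/- For 1 < α < 2 and probability densities p, q on [0,∞) with equal first moments and finite α-th moments, the quantity d_α(p,q) = sup_{s>0} |L[p](s) − L[q](s)|/s^α is finite. -/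
open MeasureTheory Real Set

lemma abs_exp_neg_sub_one_add_le_rpow {α y : ℝ} (hα1 : 1 ≤ α) (hα2 : α ≤ 2) (hy : 0 ≤ y) :
    |exp (-y) - 1 + y| ≤ y ^ α := by
  rcases hy.eq_or_lt with rfl | hy0
  · simp [zero_rpow (by linarith : α ≠ 0)]
  rcases le_or_gt y 1 with hy1 | hy1
  · calc |exp (-y) - 1 + y| = |exp (-y) - 1 - (-y)| := by ring_nf
      _ ≤ (-y) ^ 2 := abs_exp_sub_one_sub_id_le (by rwa [abs_neg, abs_of_nonneg hy])
      _ = y ^ (2 : ℝ) := by rw [rpow_two, neg_sq]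
      _ ≤ y ^ α := rpow_le_rpow_of_exponent_ge hy0 hy1 hα2
  · have h_nonneg : 0 ≤ exp (-y) - 1 + y := by linarith [add_one_le_exp (-y)]
    have h_exp_le : exp (-y) ≤ 1 := exp_le_one_iff.mpr (by linarith)
    have h_y_le : y ≤ y ^ α := by
      simpa using rpow_le_rpow_of_exponent_le hy1.le hα1
    rw [abs_of_nonneg h_nonneg]
    linarith

noncomputable def laplaceRemainder (f : ℝ → ℝ) (s : ℝ) : ℝ :=
  ∫ x in Ioi (0 : ℝ), (exp (-s * x) - 1 + s * x) * f x

section Moments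

variable {f : ℝ → ℝ} {α : ℝ}

lemma integrableOn_Ioi_mul_of_integrableOn_rpow_mul (hα1 : 1 ≤ α)
    (hf : IntegrableOn f (Ioi 0)) (hfα : IntegrableOn (fun x => x ^ α * f x) (Ioi 0)) :
    IntegrableOn (fun x => x * f x) (Ioi 0) := by
  refine (hf.norm.add hfα.norm).mono' (measurable_id.aestronglyMeasurable.mul hf.1) ?_
  filter_upwards [ae_restrict_mem measurableSet_Ioi] with x (hx : 0 < x)
  simp only [Pi.add_apply, norm_mul, norm_of_nonneg hx.le,
    norm_of_nonneg (rpow_nonneg hx.le α)]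
  rcases le_or_gt x 1 with hx1 | hx1
  · nlinarith [norm_nonneg (f x), rpow_nonneg hx.le α]
  · have : x ≤ x ^ α := by simpa using rpow_le_rpow_of_exponent_le hx1.le hα1
    nlinarith [norm_nonneg (f x)]

lemma norm_taylor_mul_le {s x : ℝ} (hα1 : 1 ≤ α) (hα2 : α ≤ 2) (hs : 0 ≤ s) (hx : 0 ≤ x) :
    ‖(exp (-s * x) - 1 + s * x) * f x‖ ≤ s ^ α * ‖x ^ α * f x‖ := by
  rw [norm_mul, norm_mul, norm_of_nonneg (rpow_nonneg hx α), ← mul_assoc,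
    ← mul_rpow hs hx, neg_mul]
  gcongr
  exact abs_exp_neg_sub_one_add_le_rpow hα1 hα2 (mul_nonneg hs hx)

variable {s : ℝ}

lemma integrableOn_Ioi_taylor_mul (hα1 : 1 ≤ α) (hα2 : α ≤ 2) (hs : 0 ≤ s)
    (hf : IntegrableOn f (Ioi 0)) (hfα : IntegrableOn (fun x => x ^ α * f x) (Ioi 0)) :
    IntegrableOn (fun x => (exp (-s * x) - 1 + s * x) * f x) (Ioi 0) := by
  refine (hfα.norm.const_mul (s ^ α)).mono' ?_ ?_
  · exact (Continuous.aestronglyMeasurable (by fun_prop)).mul hf.1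
  · filter_upwards [ae_restrict_mem measurableSet_Ioi] with x (hx : 0 < x)
    exact norm_taylor_mul_le hα1 hα2 hs hx.le

lemma abs_laplaceRemainder_le (hα1 : 1 ≤ α) (hα2 : α ≤ 2) (hs : 0 ≤ s)
    (hfα : IntegrableOn (fun x => x ^ α * f x) (Ioi 0)) :
    |laplaceRemainder f s| ≤ s ^ α * ∫ x in Ioi (0 : ℝ), ‖x ^ α * f x‖ := by
  rw [← integral_const_mul, ← norm_eq_abs]
  refine norm_integral_le_of_norm_le (hfα.norm.const_mul _) ?_
  filter_upwards [ae_restrict_mem measurableSet_Ioi] with x (hx : 0 < x)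
  exact norm_taylor_mul_le hα1 hα2 hs hx.le

lemma L_eq_laplaceRemainder_add (hα1 : 1 ≤ α) (hα2 : α ≤ 2) (hs : 0 ≤ s)
    (hf : IntegrableOn f (Ioi 0)) (hfα : IntegrableOn (fun x => x ^ α * f x) (Ioi 0)) :
    L f s = laplaceRemainder f s + (∫ x in Ioi (0 : ℝ), f x) - s * ∫ x in Ioi (0 : ℝ), x * f x := by
  have h_taylor := integrableOn_Ioi_taylor_mul hα1 hα2 hs hf hfα
  have h_mean := integrableOn_Ioi_mul_of_integrableOn_rpow_mul hα1 hf hfα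
  have h_sum : IntegrableOn (fun x => (exp (-s * x) - 1 + s * x) * f x + f x) (Ioi 0) :=
    h_taylor.add hf
  rw [laplaceRemainder, ← integral_add h_taylor hf, ← integral_const_mul,
    ← integral_sub h_sum (h_mean.const_mul s), L]
  congr 1 with x
  ring

end Moments

theorem d_alpha_finite_general (p q : ℝ → ℝ) (α w : ℝ) (hα1 : 1 < α) (hα2 : α < 2)
    (hpint : IntegrableOn p (Set.Ioi 0)) (hqint : IntegrableOn q (Set.Ioi 0))
    (hp1 : ∫ x in Set.Ioi (0:ℝ), p x = 1) (hq1 : ∫ x in Set.Ioi (0:ℝ), q x = 1)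
    (hpw : ∫ x in Set.Ioi (0:ℝ), x * p x = w)
    (hqw : ∫ x in Set.Ioi (0:ℝ), x * q x = w)
    (hpM : IntegrableOn (fun x => x ^ α * p x) (Set.Ioi 0))
    (hqM : IntegrableOn (fun x => x ^ α * q x) (Set.Ioi 0)) :
    ∃ K : ℝ, ∀ s : ℝ, 0 < s → |L p s - L q s| / s ^ α ≤ K := by
  refine ⟨(∫ x in Ioi (0 : ℝ), ‖x ^ α * p x‖) + ∫ x in Ioi (0 : ℝ), ‖x ^ α * q x‖,
    fun s hs => ?_⟩
  have h_diff : L p s - L q s = laplaceRemainder p s - laplaceRemainder q s := by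
    rw [L_eq_laplaceRemainder_add hα1.le hα2.le hs.le hpint hpM,
      L_eq_laplaceRemainder_add hα1.le hα2.le hs.le hqint hqM, hp1, hq1, hpw, hqw]
    ring
  rw [div_le_iff₀ (rpow_pos_of_pos hs α), h_diff]
  calc |laplaceRemainder p s - laplaceRemainder q s|
      ≤ |laplaceRemainder p s| + |laplaceRemainder q s| := abs_sub _ _
    _ ≤ _ := by
      linarith [abs_laplaceRemainder_le hα1.le hα2.le hs.le hpM,
        abs_laplaceRemainder_le hα1.le hα2.le hs.le hqM]

/-- Finiteness of the metric d_α for densities with equal means and finite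
α-th moments, 1 < α < 2. -/
theorem d_alpha_finite (p q : ℝ → ℝ) (α w : ℝ) (hα1 : 1 < α) (hα2 : α < 2)
    (hpm : Measurable p) (hqm : Measurable q)
    (hpnn : ∀ x, 0 ≤ p x) (hqnn : ∀ x, 0 ≤ q x)
    (hpint : IntegrableOn p (Set.Ioi 0)) (hqint : IntegrableOn q (Set.Ioi 0))
    (hp1 : ∫ x in Set.Ioi (0:ℝ), p x = 1) (hq1 : ∫ x in Set.Ioi (0:ℝ), q x = 1)
    (hpw : ∫ x in Set.Ioi (0:ℝ), x * p x = w)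
    (hqw : ∫ x in Set.Ioi (0:ℝ), x * q x = w)
    (hpM : IntegrableOn (fun x => x ^ α * p x) (Set.Ioi 0))
    (hqM : IntegrableOn (fun x => x ^ α * q x) (Set.Ioi 0)) :
    ∃ K : ℝ, ∀ s : ℝ, 0 < s → |L p s - L q s| / s ^ α ≤ K :=
  d_alpha_finite_general p q α w hα1 hα2 hpint hqint hp1 hq1 hpw hqw hpM hqM
end

section
/- The Laplace transform of the Directed Random Market operator satisfies L[T_D[p]](s) = (1/(2s)) (L[p](s) + 1) ∫_0^s L[p](s') ds'. -/
open MeasureTheory Real Set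

/-- The Directed Random Market operator. -/
noncomputable def TD (p : ℝ → ℝ) (x : ℝ) : ℝ :=
  (1 / 2) * (∫ u in (0:ℝ)..x, p (x - u) * S p u) + (1 / 2) * S p x

/-!
Both terms of `T_D[p]` are built from `S[p]`. The Laplace transform turns the half-line
convolution `p ⋆ S[p]` into `L[p] · L[S[p]]`, and Tonelli gives
`L[S[p]](s) = ∫ p(u)/u · (1 - e^{-su})/s du = (1/s) ∫_0^s L[p](t) dt`,
because `∫_0^s e^{-tu} dt = (1 - e^{-su})/u`. All of this is computed with lower Lebesgue
integrals of nonnegative functions, where Tonelli needs no integrability; the finiteness of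
`∫ p(u)/u du` is what converts the results back into Bochner integrals.
-/

open scoped ENNReal

noncomputable def lintegralLaplace (f : ℝ → ℝ≥0∞) (s : ℝ) : ℝ≥0∞ :=
  ∫⁻ x in Ioi 0, ENNReal.ofReal (exp (-s * x)) * f x

section LintegralLaplace

variable {f g : ℝ → ℝ≥0∞}

theorem lintegral_Ioc_exp_neg_mul {c : ℝ} (hc : 0 < c) {b : ℝ} (hb : 0 ≤ b) :
    ∫⁻ t in Ioc 0 b, ENNReal.ofReal (exp (-c * t)) =
      ENNReal.ofReal ((1 - exp (-c * b)) / c) := by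
  have hcont : Continuous fun t => exp (-c * t) := by fun_prop
  rw [← ofReal_integral_eq_lintegral_ofReal hcont.integrableOn_Ioc
    (.of_forall fun t => (exp_pos _).le), ← intervalIntegral.integral_of_le hb,
    intervalIntegral.integral_comp_mul_left exp (neg_ne_zero.2 hc.ne'), integral_exp]
  congr 1
  simp only [mul_zero, exp_zero, smul_eq_mul]
  field_simp
  ring

theorem lintegral_Ioc_lintegralLaplace {s : ℝ} (hs : 0 ≤ s) (hf : Measurable f) :
    ∫⁻ t in Ioc 0 s, lintegralLaplace f t =
      ∫⁻ u in Ioi 0, ENNReal.ofReal ((1 - exp (-s * u)) / u) * f u := by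
  simp only [lintegralLaplace]
  rw [lintegral_lintegral_swap (by fun_prop)]
  refine setLIntegral_congr_fun measurableSet_Ioi fun u (hu : 0 < u) => ?_
  simp_rw [neg_mul, mul_comm _ u, ← neg_mul]
  rw [lintegral_mul_const _ (by fun_prop), lintegral_Ioc_exp_neg_mul hu hs]

theorem lintegralLaplace_lintegral_Ioi {s : ℝ} (hs : 0 < s) (hf : Measurable f) :
    lintegralLaplace (fun x => ∫⁻ u in Ioi x, f u) s =
      ∫⁻ u in Ioi 0, ENNReal.ofReal ((1 - exp (-s * u)) / s) * f u := by
  set F : ℝ × ℝ → ℝ≥0∞ :=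
    {z | z.1 < z.2}.indicator fun z => ENNReal.ofReal (exp (-s * z.1)) * f z.2
  have hF : Measurable F :=
    (Measurable.mul (by fun_prop) (hf.comp measurable_snd)).indicator
      (measurableSet_lt measurable_fst measurable_snd)
  have inner : ∀ x ∈ Ioi (0 : ℝ), ENNReal.ofReal (exp (-s * x)) * ∫⁻ u in Ioi x, f u =
      ∫⁻ u in Ioi 0, F (x, u) := by
    intro x (hx : 0 < x)
    have hFx : ∀ u, F (x, u) =
        (Ioi x).indicator (fun u => ENNReal.ofReal (exp (-s * x)) * f u) u := fun u => rfl
    simp_rw [hFx]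
    rw [setLIntegral_indicator measurableSet_Ioi, inter_eq_left.2 (Ioi_subset_Ioi hx.le),
      lintegral_const_mul _ hf]
  rw [lintegralLaplace, setLIntegral_congr_fun measurableSet_Ioi inner,
    lintegral_lintegral_swap (f := fun x u => F (x, u)) hF.aemeasurable]
  refine setLIntegral_congr_fun measurableSet_Ioi fun u (hu : 0 < u) => ?_
  have hFu : ∀ x, F (x, u) =
      (Iio u).indicator (fun x => ENNReal.ofReal (exp (-s * x)) * f u) x := fun x => rfl
  simp_rw [hFu]
  rw [setLIntegral_indicator measurableSet_Iio, inter_comm, Ioi_inter_Iio,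
    setLIntegral_congr Ioo_ae_eq_Ioc, lintegral_mul_const _ (by fun_prop),
    lintegral_Ioc_exp_neg_mul hs hu.le]

theorem lintegral_exp_mul_lconvolution (s : ℝ) (hf : Measurable f) (hg : Measurable g) :
    ∫⁻ x, ENNReal.ofReal (exp (-s * x)) * (f ⋆ₗ g) x =
      (∫⁻ x, ENNReal.ofReal (exp (-s * x)) * f x) *
        ∫⁻ x, ENNReal.ofReal (exp (-s * x)) * g x := by
  set e : ℝ → ℝ≥0∞ := fun x => ENNReal.ofReal (exp (-s * x))
  have hchar : ∀ x y, e x = e y * e (-y + x) := fun x y => by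
    simp only [e, ← ENNReal.ofReal_mul (exp_pos _).le, ← exp_add]
    ring_nf
  calc ∫⁻ x, e x * (f ⋆ₗ g) x
      = ∫⁻ x, ∫⁻ y, e y * f y * (e (-y + x) * g (-y + x)) := by
        refine lintegral_congr fun x => ?_
        rw [lconvolution_def, ← lintegral_const_mul'' _ (by fun_prop)]
        refine lintegral_congr fun y => ?_
        rw [hchar x y]
        ring
    _ = ∫⁻ y, e y * f y * ∫⁻ x, e x * g x := by
        rw [lintegral_lintegral_swap (by fun_prop)]
        refine lintegral_congr fun y => ?_
        rw [lintegral_const_mul'' _ (by fun_prop),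
          lintegral_add_left_eq_self (fun x => e x * g x) (-y)]
    _ = (∫⁻ x, e x * f x) * ∫⁻ x, e x * g x := lintegral_mul_const'' _ (by fun_prop)

theorem lintegral_Ioc_eq_lconvolution_indicator (f g : ℝ → ℝ≥0∞) (x : ℝ) :
    ∫⁻ u in Ioc 0 x, f (x - u) * g u = ((Ioi 0).indicator g ⋆ₗ (Ici 0).indicator f) x := by
  rw [lconvolution_def, ← lintegral_indicator measurableSet_Ioc]
  refine lintegral_congr fun u => ?_
  by_cases hu : 0 < u <;> by_cases hux : u ≤ x <;> simp [hu, hux, neg_add_eq_sub, mul_comm]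

theorem measurable_lintegral_Ioc_sub_mul (hf : Measurable f) (hg : Measurable g) :
    Measurable fun x => ∫⁻ u in Ioc 0 x, f (x - u) * g u := by
  simp_rw [lintegral_Ioc_eq_lconvolution_indicator f g]
  exact measurable_lconvolution _ (hg.indicator measurableSet_Ioi)
    (hf.indicator measurableSet_Ici)

theorem lintegralLaplace_lintegral_Ioc_sub_mul (s : ℝ) (hf : Measurable f) (hg : Measurable g) :
    lintegralLaplace (fun x => ∫⁻ u in Ioc 0 x, f (x - u) * g u) s =
      lintegralLaplace f s * lintegralLaplace g s := by
  have hsupp : Function.support (fun x => ENNReal.ofReal (exp (-s * x)) *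
      ∫⁻ u in Ioc 0 x, f (x - u) * g u) ⊆ Ioi 0 := fun x hx => by
    by_contra hx0
    simp [Ioc_eq_empty (show ¬ (0 : ℝ) < x from hx0)] at hx
  have hind : ∀ (h : ℝ → ℝ≥0∞) {t : Set ℝ}, MeasurableSet t →
      ∫⁻ x, ENNReal.ofReal (exp (-s * x)) * t.indicator h x =
        ∫⁻ x in t, ENNReal.ofReal (exp (-s * x)) * h x := fun h {t} ht => by
    rw [← lintegral_indicator ht]
    exact lintegral_congr fun x =>
      (indicator_mul_right t (fun x => ENNReal.ofReal (exp (-s * x))) h).symm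
  simp_rw [lintegralLaplace, setLIntegral_eq_of_support_subset hsupp,
    lintegral_Ioc_eq_lconvolution_indicator f g]
  rw [lintegral_exp_mul_lconvolution s (hg.indicator measurableSet_Ioi)
      (hf.indicator measurableSet_Ici), hind g measurableSet_Ioi, hind f measurableSet_Ici,
    setLIntegral_congr Ioi_ae_eq_Ici.symm, mul_comm]

end LintegralLaplace

section DirectedRandomMarket

variable {p : ℝ → ℝ}

noncomputable def lintegralS (p : ℝ → ℝ) (x : ℝ) : ℝ≥0∞ :=
  ∫⁻ u in Ioi x, ENNReal.ofReal (p u / u)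

theorem antitone_lintegralS : Antitone (lintegralS p) :=
  fun _ _ hab => lintegral_mono_set (Ioi_subset_Ioi hab)

theorem lintegralS_lt_top (hS : IntegrableOn (fun u => p u / u) (Ioi 0)) {x : ℝ} (hx : 0 ≤ x) :
    lintegralS p x < ∞ :=
  (antitone_lintegralS hx).trans_lt hS.lintegral_lt_top

theorem S_eq_toReal_lintegralS (hpm : Measurable p) (hpnn : ∀ x, 0 ≤ p x) {x : ℝ}
    (hx : 0 ≤ x) : S p x = (lintegralS p x).toReal :=
  integral_eq_lintegral_of_nonneg_ae
    ((ae_restrict_iff' measurableSet_Ioi).2 (.of_forall fun u (hu : x < u) =>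
      div_nonneg (hpnn u) (hx.trans hu.le)))
    (hpm.div measurable_id).aestronglyMeasurable

theorem L_eq_toReal_lintegralLaplace (hpm : Measurable p) (hpnn : ∀ x, 0 ≤ p x) (t : ℝ) :
    L p t = (lintegralLaplace (fun u => ENNReal.ofReal (p u)) t).toReal := by
  rw [L, integral_eq_lintegral_of_nonneg_ae
    (.of_forall fun u => mul_nonneg (exp_pos _).le (hpnn u)) (by fun_prop)]
  simp_rw [ENNReal.ofReal_mul (exp_pos _).le]
  rfl

theorem lintegralLaplace_ofReal_lt_top (hpint : IntegrableOn p (Ioi 0)) {t : ℝ} (ht : 0 ≤ t) :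
    lintegralLaplace (fun u => ENNReal.ofReal (p u)) t < ∞ := by
  refine lt_of_le_of_lt (setLIntegral_mono' measurableSet_Ioi fun u (hu : 0 < u) => ?_)
    hpint.lintegral_lt_top
  refine mul_le_of_le_one_left zero_le (ENNReal.ofReal_le_one.2 (exp_le_one_iff.2 ?_))
  nlinarith

theorem lintegralLaplace_lintegralS (hpm : Measurable p) {s : ℝ} (hs : 0 < s) :
    lintegralLaplace (lintegralS p) s =
      ENNReal.ofReal s⁻¹ *
        ∫⁻ t in Ioc 0 s, lintegralLaplace (fun u => ENNReal.ofReal (p u)) t := by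
  unfold lintegralS
  rw [lintegralLaplace_lintegral_Ioi hs (by fun_prop),
    lintegral_Ioc_lintegralLaplace hs.le (by fun_prop), ← lintegral_const_mul _ (by fun_prop)]
  refine setLIntegral_congr_fun measurableSet_Ioi fun u (hu : 0 < u) => ?_
  have hdecay : 0 ≤ 1 - exp (-s * u) := sub_nonneg.2 (exp_le_one_iff.2 (by nlinarith))
  rw [← ENNReal.ofReal_mul (div_nonneg hdecay hs.le),
    ← ENNReal.ofReal_mul (div_nonneg hdecay hu.le), ← ENNReal.ofReal_mul (inv_nonneg.2 hs.le)]
  congr 1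
  field_simp

theorem lintegralLaplace_lintegralS_lt_top (hS : IntegrableOn (fun u => p u / u) (Ioi 0))
    {s : ℝ} (hs : 0 < s) : lintegralLaplace (lintegralS p) s < ∞ :=
  calc lintegralLaplace (lintegralS p) s
      ≤ ∫⁻ x in Ioi 0, ENNReal.ofReal (exp (-s * x)) * lintegralS p 0 :=
        setLIntegral_mono' measurableSet_Ioi fun x (hx : 0 < x) => by
          gcongr
          exact antitone_lintegralS hx.le
    _ = (∫⁻ x in Ioi 0, ENNReal.ofReal (exp (-s * x))) * lintegralS p 0 :=
        lintegral_mul_const _ (by fun_prop)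
    _ < ∞ := ENNReal.mul_lt_top (exp_neg_integrableOn_Ioi 0 hs).lintegral_lt_top
        (lintegralS_lt_top hS le_rfl)

theorem intervalIntegral_sub_mul_S_eq_toReal (hpm : Measurable p) (hpnn : ∀ x, 0 ≤ p x)
    (hS : IntegrableOn (fun u => p u / u) (Ioi 0)) {x : ℝ} (hx : 0 < x) :
    ∫ u in (0 : ℝ)..x, p (x - u) * S p u =
      (∫⁻ u in Ioc 0 x, ENNReal.ofReal (p (x - u)) * lintegralS p u).toReal := by
  have hSm : Measurable (lintegralS p) := antitone_lintegralS.measurable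
  rw [intervalIntegral.integral_of_le hx.le, ← integral_toReal
    (by fun_prop : Measurable fun u => ENNReal.ofReal (p (x - u)) * lintegralS p u).aemeasurable
    ((ae_restrict_iff' measurableSet_Ioc).2 (.of_forall fun u hu =>
      ENNReal.mul_lt_top ENNReal.ofReal_lt_top (lintegralS_lt_top hS hu.1.le)))]
  refine setIntegral_congr_fun measurableSet_Ioc fun u hu => ?_
  rw [ENNReal.toReal_mul, ENNReal.toReal_ofReal (hpnn _), S_eq_toReal_lintegralS hpm hpnn hu.1.le]

theorem intervalIntegral_L_eq_toReal (hpm : Measurable p) (hpnn : ∀ x, 0 ≤ p x)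
    (hS : IntegrableOn (fun u => p u / u) (Ioi 0)) {s : ℝ} (hs : 0 < s) :
    ∫ t in (0 : ℝ)..s, L p t =
      (∫⁻ t in Ioc 0 s, lintegralLaplace (fun u => ENNReal.ofReal (p u)) t).toReal := by
  have hm : Measurable (lintegralLaplace fun u => ENNReal.ofReal (p u)) := by
    unfold lintegralLaplace
    fun_prop
  have hfin : ∫⁻ t in Ioc 0 s, lintegralLaplace (fun u => ENNReal.ofReal (p u)) t ≠ ∞ :=
    fun htop => (lintegralLaplace_lintegralS_lt_top hS hs).ne <| by
      rw [lintegralLaplace_lintegralS hpm hs, htop, ENNReal.mul_top (by simpa using hs)]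
  simp_rw [intervalIntegral.integral_of_le hs.le, L_eq_toReal_lintegralLaplace hpm hpnn]
  exact integral_toReal hm.aemeasurable (ae_lt_top' hm.aemeasurable hfin)

theorem L_TD_eq_toReal (hpm : Measurable p) (hpnn : ∀ x, 0 ≤ p x)
    (hpint : IntegrableOn p (Ioi 0)) (hS : IntegrableOn (fun u => p u / u) (Ioi 0))
    {s : ℝ} (hs : 0 < s) :
    L (TD p) s =
      1 / 2 * (lintegralLaplace (fun u => ENNReal.ofReal (p u)) s).toReal *
          (lintegralLaplace (lintegralS p) s).toReal +
        1 / 2 * (lintegralLaplace (lintegralS p) s).toReal := by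
  set e : ℝ → ℝ≥0∞ := fun x => ENNReal.ofReal (exp (-s * x))
  set conv : ℝ → ℝ≥0∞ := fun x =>
    ∫⁻ u in Ioc 0 x, ENNReal.ofReal (p (x - u)) * lintegralS p u
  have hSm : Measurable (lintegralS p) := antitone_lintegralS.measurable
  have hconv : ∫⁻ x in Ioi 0, e x * conv x =
      lintegralLaplace (fun u => ENNReal.ofReal (p u)) s * lintegralLaplace (lintegralS p) s :=
    lintegralLaplace_lintegral_Ioc_sub_mul s hpm.ennreal_ofReal hSm
  have hS_fin : ∫⁻ x in Ioi 0, e x * lintegralS p x ≠ ∞ :=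
    (lintegralLaplace_lintegralS_lt_top hS hs).ne
  have hconv_fin : ∫⁻ x in Ioi 0, e x * conv x ≠ ∞ := hconv ▸
    ENNReal.mul_ne_top (lintegralLaplace_ofReal_lt_top hpint hs.le).ne hS_fin
  have hS_meas : AEMeasurable (fun x => e x * lintegralS p x) (volume.restrict (Ioi 0)) := by
    fun_prop
  have hconv_meas : AEMeasurable (fun x => e x * conv x) (volume.restrict (Ioi 0)) :=
    ((by fun_prop : Measurable e).mul
      (measurable_lintegral_Ioc_sub_mul hpm.ennreal_ofReal hSm)).aemeasurable
  have hTD : EqOn (fun x => exp (-s * x) * TD p x)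
      (fun x => 1 / 2 * (e x * conv x).toReal + 1 / 2 * (e x * lintegralS p x).toReal)
      (Ioi 0) := fun x (hx : 0 < x) => by
    simp only [TD, e, conv, ENNReal.toReal_mul, ENNReal.toReal_ofReal (exp_pos _).le,
      intervalIntegral_sub_mul_S_eq_toReal hpm hpnn hS hx,
      S_eq_toReal_lintegralS hpm hpnn hx.le]
    ring
  rw [L, setIntegral_congr_fun measurableSet_Ioi hTD, integral_add
      ((integrable_toReal_of_lintegral_ne_top hconv_meas hconv_fin).const_mul _)
      ((integrable_toReal_of_lintegral_ne_top hS_meas hS_fin).const_mul _),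
    integral_const_mul, integral_const_mul,
    integral_toReal hconv_meas (ae_lt_top' hconv_meas hconv_fin),
    integral_toReal hS_meas (ae_lt_top' hS_meas hS_fin), hconv, ENNReal.toReal_mul, mul_assoc]
  rfl

end DirectedRandomMarket

theorem laplace_TD_general (p : ℝ → ℝ) (hpm : Measurable p) (hpnn : ∀ x, 0 ≤ p x)
    (hpint : IntegrableOn p (Set.Ioi 0))
    (hS : IntegrableOn (fun u => p u / u) (Set.Ioi 0)) :
    ∀ s : ℝ, 0 < s →
      L (TD p) s = (1 / (2 * s)) * (L p s + 1) * ∫ t in (0:ℝ)..s, L p t := by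
  intro s hs
  rw [L_TD_eq_toReal hpm hpnn hpint hS hs, lintegralLaplace_lintegralS hpm hs,
    intervalIntegral_L_eq_toReal hpm hpnn hS hs, L_eq_toReal_lintegralLaplace hpm hpnn,
    ENNReal.toReal_mul, ENNReal.toReal_ofReal (inv_nonneg.2 hs.le)]
  field_simp

/-- The Laplace transform of the Directed Random Market operator. -/
theorem laplace_TD (p : ℝ → ℝ) (hpm : Measurable p) (hpnn : ∀ x, 0 ≤ p x)
    (hpint : IntegrableOn p (Set.Ioi 0)) (hp1 : ∫ x in Set.Ioi (0:ℝ), p x = 1)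
    (hS : IntegrableOn (fun u => p u / u) (Set.Ioi 0)) :
    ∀ s : ℝ, 0 < s →
      L (TD p) s = (1 / (2 * s)) * (L p s + 1) * ∫ t in (0:ℝ)..s, L p t :=
  laplace_TD_general p hpm hpnn hpint hS
end

section
/- For μ ∈ (0,1), the Gamma distribution with shape α = (2−μ)/(1+μ) and scale β = (1+μ)w/(2−μ) matches the moments M_1 = w, M_2 = 3w²/(2−μ), and M_3 = 3(4+μ)w³/(2−μ)², but its fourth moment 3(2μ²+13μ+20)w⁴/(2−μ)³ differs from 5(μ²+8μ+12)w⁴/(2−μ)³. -/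
open Real

/-- The Gamma distribution with shape (2-μ)/(1+μ) and scale (1+μ)w/(2-μ) matches
the first three moments of the mixed-model equilibrium but not the fourth. -/
theorem gamma_fit_moments (μ w : ℝ) (hμ0 : 0 < μ) (hμ1 : μ < 1) (hw : 0 < w) :
    let α : ℝ := (2 - μ) / (1 + μ)
    let β : ℝ := (1 + μ) * w / (2 - μ)
    β * α = w ∧
    β ^ 2 * (α * (α + 1)) = 3 / (2 - μ) * w ^ 2 ∧
    β ^ 3 * (α * (α + 1) * (α + 2)) = 3 * (4 + μ) / (2 - μ) ^ 2 * w ^ 3 ∧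
    β ^ 4 * (α * (α + 1) * (α + 2) * (α + 3))
      = 3 * (2 * μ ^ 2 + 13 * μ + 20) / (2 - μ) ^ 3 * w ^ 4 ∧
    3 * (2 * μ ^ 2 + 13 * μ + 20) / (2 - μ) ^ 3 * w ^ 4
      ≠ 5 * (μ ^ 2 + 8 * μ + 12) / (2 - μ) ^ 3 * w ^ 4 := by
  intro α β
  have h1 : (1 + μ) ≠ 0 := by linarith
  have h2 : (2 - μ) ≠ 0 := by linarith
  have hw' : w ≠ 0 := ne_of_gt hw
  refine ⟨?_, ?_, ?_, ?_, ?_⟩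
  · show (1 + μ) * w / (2 - μ) * ((2 - μ) / (1 + μ)) = w
    field_simp
  · show ((1 + μ) * w / (2 - μ)) ^ 2 * ((2 - μ) / (1 + μ) * ((2 - μ) / (1 + μ) + 1)) = _
    field_simp
    ring
  · show ((1 + μ) * w / (2 - μ)) ^ 3 * ((2 - μ) / (1 + μ) * ((2 - μ) / (1 + μ) + 1) * ((2 - μ) / (1 + μ) + 2)) = _
    field_simp
    ring
  · show ((1 + μ) * w / (2 - μ)) ^ 4 * ((2 - μ) / (1 + μ) * ((2 - μ) / (1 + μ) + 1) * ((2 - μ) / (1 + μ) + 2) * ((2 - μ) / (1 + μ) + 3)) = _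
    field_simp
    ring
  · intro h
    have h3 : (2 - μ) ^ 3 ≠ 0 := pow_ne_zero _ h2
    have := mul_right_cancel₀ (pow_ne_zero 4 hw') h
    field_simp at this
    nlinarith [this]
end
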